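/- arXiv:2403.07288 — 2 statements merged into one kernel-verified Lean document; each statement's English description precedes it below -/
import Mathlib

section
/- Variance decomposition of the adjusted estimating function (Remark on efficiency loss): if every coordinate of ω ↦ U k (X ω) (k ∈ Fin K) is square-integrable, then for all coordinates a, b ∈ Fin d, 𝔼[φ(Y*, X)_a · φ(Y*, X)_b] = 𝔼[U(Y, X)_a · U(Y, X)_b] + 𝔼[(φ(Y*, X)_a − U(Y, X)_a) · (φ(Y*, X)_b − U(Y, X)_b)], where φ i x = Σ_k (P⁻¹) k i • U k x. -/
open MeasureTheory Finset
open scoped ENNReal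

/-- Product of two `L²` functions is integrable. -/
lemma aux_l2_mul_integrable {Ω : Type*} [MeasurableSpace Ω] {μ : Measure Ω}
    {f g : Ω → ℝ} (hf : MemLp f 2 μ) (hg : MemLp g 2 μ) :
    Integrable (fun ω => f ω * g ω) μ := by
  have h : (1 : ℝ≥0∞) / 1 = 1 / 2 + 1 / 2 := by
    rw [ENNReal.div_add_div_same, one_add_one_eq_two,
      ENNReal.div_self two_ne_zero ENNReal.ofNat_ne_top, div_one]
  have := (hf.smul hg (hpqr := ⟨by simpa [one_div] using h.symm⟩) : MemLp (g • f) 1 μ)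
  rw [memLp_one_iff_integrable] at this
  simpa [Pi.smul_apply, smul_eq_mul, mul_comm, Pi.mul_def] using this

/-- Summing the indicators of the fibers of a finitely-valued map recovers the value. -/
lemma aux_fiber_sum {Ω ι : Type*} [Fintype ι] [DecidableEq ι]
    (g : ι → Ω → ℝ) (Z : Ω → ι) (ω : Ω) :
    (∑ j : ι, ({ω | Z ω = j}).indicator (g j) ω) = g (Z ω) ω := by
  rw [Finset.sum_eq_single (Z ω)]
  · simp [Set.indicator_apply]
  · intro j _ hj
    refine Set.indicator_of_notMem ?_ _
    intro h
    exact hj (Eq.symm h)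
  · exact fun h => absurd (Finset.mem_univ _) h

/-- Integral decomposition over the fibers of a finitely-valued measurable map. -/
lemma aux_partition {Ω ι : Type*} [MeasurableSpace Ω] [Fintype ι] [MeasurableSpace ι]
    [MeasurableSingletonClass ι] (μ : Measure Ω) (Z : Ω → ι) (hZ : Measurable Z)
    (f : Ω → ℝ) (hf : Integrable f μ) :
    ∫ ω, f ω ∂μ = ∑ j : ι, ∫ ω in Z ⁻¹' {j}, f ω ∂μ := by
  classical
  have hmeas : ∀ j : ι, MeasurableSet (Z ⁻¹' {j}) := fun j => hZ (measurableSet_singleton j)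
  have h1 : ∀ j : ι, ∫ ω in Z ⁻¹' {j}, f ω ∂μ = ∫ ω, (Z ⁻¹' {j}).indicator f ω ∂μ :=
    fun j => (integral_indicator (hmeas j)).symm
  simp_rw [h1]
  rw [← integral_finset_sum _ (fun j _ => hf.indicator (hmeas j))]
  refine integral_congr_ae (Filter.Eventually.of_forall fun ω => ?_)
  have : ∀ j : ι, Z ⁻¹' {j} = {ω | Z ω = j} := by
    intro j; ext ω'; simp [Set.mem_preimage]
  simp_rw [this]
  exact (aux_fiber_sum (fun _ => f) Z ω).symm

/-- Key transfer lemma: if the joint law of `X` on `S` equals `c` times the one on `T`,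
then integrals of functions of `X` transfer accordingly. -/
lemma aux_key {Ω 𝒳 : Type*} [MeasurableSpace Ω] [MeasurableSpace 𝒳]
    (μ : Measure Ω) [IsProbabilityMeasure μ] {X : Ω → 𝒳} (hX : Measurable X)
    (S T : Set Ω) (hS : MeasurableSet S) (hT : MeasurableSet T) (c : ℝ)
    (hc : ∀ A : Set 𝒳, MeasurableSet A →
      (μ (S ∩ X ⁻¹' A)).toReal = c * (μ (T ∩ X ⁻¹' A)).toReal)
    (h : 𝒳 → ℝ) (hm : Measurable h) :
    ∫ ω in S, h (X ω) ∂μ = c * ∫ ω in T, h (X ω) ∂μ := by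
  set ν := (μ.restrict S).map X with hνdef
  set ρ := (μ.restrict T).map X with hρdef
  have hνapp : ∀ A : Set 𝒳, MeasurableSet A → ν A = μ (S ∩ X ⁻¹' A) := by
    intro A hA
    rw [hνdef, Measure.map_apply hX hA, Measure.restrict_apply (hX hA), Set.inter_comm]
  have hρapp : ∀ A : Set 𝒳, MeasurableSet A → ρ A = μ (T ∩ X ⁻¹' A) := by
    intro A hA
    rw [hρdef, Measure.map_apply hX hA, Measure.restrict_apply (hX hA), Set.inter_comm]
  have hSν : ∫ ω in S, h (X ω) ∂μ = ∫ x, h x ∂ν :=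
    (integral_map hX.aemeasurable hm.aestronglyMeasurable).symm
  have hTρ : ∫ ω in T, h (X ω) ∂μ = ∫ x, h x ∂ρ :=
    (integral_map hX.aemeasurable hm.aestronglyMeasurable).symm
  by_cases hT0 : μ T = 0
  · have hρ0 : ρ = 0 := by
      rw [hρdef, Measure.restrict_eq_zero.mpr hT0, Measure.map_zero]
    have hS0 : μ S = 0 := by
      have := hc Set.univ MeasurableSet.univ
      rw [Set.preimage_univ, Set.inter_univ, Set.inter_univ, hT0] at this
      simp only [ENNReal.toReal_zero, mul_zero] at this
      exact (ENNReal.toReal_eq_zero_iff _).mp this |>.resolve_right (measure_ne_top μ S)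
    have hν0 : ν = 0 := by
      rw [hνdef, Measure.restrict_eq_zero.mpr hS0, Measure.map_zero]
    rw [hSν, hTρ, hν0, hρ0]
    simp
  · have hTpos : 0 < (μ T).toReal := ENNReal.toReal_pos hT0 (measure_ne_top μ T)
    have hcuniv := hc Set.univ MeasurableSet.univ
    rw [Set.preimage_univ, Set.inter_univ, Set.inter_univ] at hcuniv
    have hc0 : 0 ≤ c := by nlinarith [ENNReal.toReal_nonneg (a := μ S)]
    have hνρ : ν = ENNReal.ofReal c • ρ := by
      ext A hA
      have h1 : ν A ≠ ⊤ := by rw [hνapp A hA]; exact measure_ne_top μ _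
      have h2 : ρ A ≠ ⊤ := by rw [hρapp A hA]; exact measure_ne_top μ _
      have h3 : (ENNReal.ofReal c * ρ A) ≠ ⊤ :=
        ENNReal.mul_ne_top ENNReal.ofReal_ne_top h2
      rw [Measure.smul_apply, smul_eq_mul]
      refine (ENNReal.toReal_eq_toReal_iff' h1 h3).mp ?_
      rw [ENNReal.toReal_mul, ENNReal.toReal_ofReal hc0, hνapp A hA, hρapp A hA]
      exact hc A hA
    rw [hSν, hTρ, hνρ, integral_smul_measure, ENNReal.toReal_ofReal hc0, smul_eq_mul]

/-- Variance decomposition of the adjusted estimating function: for all coordinates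
`a b : Fin d`, `𝔼[φ(Y*,X)_a * φ(Y*,X)_b] = 𝔼[U(Y,X)_a * U(Y,X)_b] +
𝔼[(φ(Y*,X)_a − U(Y,X)_a) * (φ(Y*,X)_b − U(Y,X)_b)]`,
where `φ i x = ∑ k, (P⁻¹) k i • U k x`. -/
theorem pram_variance_decomposition {Ω 𝒳 : Type*} [MeasurableSpace Ω] [MeasurableSpace 𝒳]
    (μ : Measure Ω) [IsProbabilityMeasure μ] {K d : ℕ}
    (Y Ystar : Ω → Fin K) (X : Ω → 𝒳)
    (hY : Measurable Y) (hYstar : Measurable Ystar) (hX : Measurable X)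
    (P : Matrix (Fin K) (Fin K) ℝ) (hP : IsUnit P.det)
    (hpram : ∀ (i j : Fin K) (A : Set 𝒳), MeasurableSet A →
      (μ {ω | Ystar ω = i ∧ Y ω = j ∧ X ω ∈ A}).toReal
        = P i j * (μ {ω | Y ω = j ∧ X ω ∈ A}).toReal)
    (U : Fin K → 𝒳 → (Fin d → ℝ)) (hU : ∀ k, Measurable (U k))
    (hUsq : ∀ (k : Fin K) (a : Fin d), MemLp (fun ω => U k (X ω) a) 2 μ)
    (φ : Fin K → 𝒳 → (Fin d → ℝ))
    (hφ : ∀ i x, φ i x = ∑ k : Fin K, P⁻¹ k i • U k x) :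
    ∀ a b : Fin d,
      ∫ ω, φ (Ystar ω) (X ω) a * φ (Ystar ω) (X ω) b ∂μ
        = ∫ ω, U (Y ω) (X ω) a * U (Y ω) (X ω) b ∂μ
          + ∫ ω, (φ (Ystar ω) (X ω) a - U (Y ω) (X ω) a)
              * (φ (Ystar ω) (X ω) b - U (Y ω) (X ω) b) ∂μ := by
  -- coordinate measurability
  have hUm : ∀ (k : Fin K) (a : Fin d), Measurable fun x => U k x a :=
    fun k a => (measurable_pi_apply a).comp (hU k)
  have hφcoord : ∀ i x (a : Fin d), φ i x a = ∑ k : Fin K, P⁻¹ k i * U k x a := by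
    intro i x a
    rw [hφ]
    simp [Finset.sum_apply]
  have hφm : ∀ (i : Fin K) (a : Fin d), Measurable fun x => φ i x a := by
    intro i a
    simp only [hφcoord]
    exact Finset.measurable_sum _ fun k _ => (hUm k a).const_mul _
  -- square integrability of the composed coordinate processes
  have hφsq : ∀ (i : Fin K) (a : Fin d), MemLp (fun ω => φ i (X ω) a) 2 μ := by
    intro i a
    have : (fun ω => φ i (X ω) a) = fun ω => ∑ k : Fin K, P⁻¹ k i * U k (X ω) a := by
      funext ω; exact hφcoord i (X ω) a
    rw [this]
    exact memLp_finset_sum _ fun k _ => (hUsq k a).const_mul _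
  have hV2 : ∀ a : Fin d, MemLp (fun ω => U (Y ω) (X ω) a) 2 μ := by
    intro a
    have heq : (fun ω => U (Y ω) (X ω) a)
        = fun ω => ∑ j : Fin K, ({ω | Y ω = j}).indicator (fun ω => U j (X ω) a) ω := by
      funext ω
      exact (aux_fiber_sum (fun j ω => U j (X ω) a) Y ω).symm
    rw [heq]
    exact memLp_finset_sum _ fun j _ =>
      ((hUsq j a).indicator (hY (measurableSet_singleton j)))
  have hΦ2 : ∀ a : Fin d, MemLp (fun ω => φ (Ystar ω) (X ω) a) 2 μ := by
    intro a
    have heq : (fun ω => φ (Ystar ω) (X ω) a)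
        = fun ω => ∑ i : Fin K, ({ω | Ystar ω = i}).indicator (fun ω => φ i (X ω) a) ω := by
      funext ω
      exact (aux_fiber_sum (fun i ω => φ i (X ω) a) Ystar ω).symm
    rw [heq]
    exact memLp_finset_sum _ fun i _ =>
      ((hφsq i a).indicator (hYstar (measurableSet_singleton i)))
  -- integrability of all products
  have hIntΦΦ : ∀ a b : Fin d,
      Integrable (fun ω => φ (Ystar ω) (X ω) a * φ (Ystar ω) (X ω) b) μ :=
    fun a b => aux_l2_mul_integrable (hΦ2 a) (hΦ2 b)
  have hIntΦV : ∀ a b : Fin d,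
      Integrable (fun ω => φ (Ystar ω) (X ω) a * U (Y ω) (X ω) b) μ :=
    fun a b => aux_l2_mul_integrable (hΦ2 a) (hV2 b)
  have hIntVΦ : ∀ a b : Fin d,
      Integrable (fun ω => U (Y ω) (X ω) a * φ (Ystar ω) (X ω) b) μ :=
    fun a b => aux_l2_mul_integrable (hV2 a) (hΦ2 b)
  have hIntVV : ∀ a b : Fin d,
      Integrable (fun ω => U (Y ω) (X ω) a * U (Y ω) (X ω) b) μ :=
    fun a b => aux_l2_mul_integrable (hV2 a) (hV2 b)
  -- the sets of the partition
  have hSmeas : ∀ i j : Fin K, MeasurableSet {ω | Ystar ω = i ∧ Y ω = j} := by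
    intro i j
    exact (hYstar (measurableSet_singleton i)).inter (hY (measurableSet_singleton j))
  have hTmeas : ∀ j : Fin K, MeasurableSet {ω | Y ω = j} :=
    fun j => hY (measurableSet_singleton j)
  -- the key transfer consequence of PRAM
  have key : ∀ (i j : Fin K) (h : 𝒳 → ℝ), Measurable h →
      ∫ ω in {ω | Ystar ω = i ∧ Y ω = j}, h (X ω) ∂μ
        = P i j * ∫ ω in {ω | Y ω = j}, h (X ω) ∂μ := by
    intro i j h hm
    refine aux_key μ hX _ _ (hSmeas i j) (hTmeas j) (P i j) ?_ h hm
    intro A hA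
    have e1 : {ω | Ystar ω = i ∧ Y ω = j} ∩ X ⁻¹' A
        = {ω | Ystar ω = i ∧ Y ω = j ∧ X ω ∈ A} := by
      ext ω; simp [Set.mem_setOf_eq, and_assoc]
    have e2 : {ω | Y ω = j} ∩ X ⁻¹' A = {ω | Y ω = j ∧ X ω ∈ A} := by
      ext ω; simp [Set.mem_setOf_eq]
    rw [e1, e2]
    exact hpram i j A hA
  -- partition identity over (Ystar, Y)
  have decompS : ∀ (f : Ω → ℝ), Integrable f μ →
      ∫ ω, f ω ∂μ = ∑ i : Fin K, ∑ j : Fin K,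
        ∫ ω in {ω | Ystar ω = i ∧ Y ω = j}, f ω ∂μ := by
    intro f hf
    have hZ : Measurable (fun ω => (Ystar ω, Y ω)) := hYstar.prodMk hY
    have := aux_partition μ (fun ω => (Ystar ω, Y ω)) hZ f hf
    rw [this, Fintype.sum_prod_type]
    refine Finset.sum_congr rfl fun i _ => Finset.sum_congr rfl fun j _ => ?_
    have hset : (fun ω => (Ystar ω, Y ω)) ⁻¹' {(i, j)} = {ω | Ystar ω = i ∧ Y ω = j} := by
      ext ω
      simp [Prod.ext_iff]
    rw [hset]
  have decompT : ∀ (f : Ω → ℝ), Integrable f μ →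
      ∫ ω, f ω ∂μ = ∑ j : Fin K, ∫ ω in {ω | Y ω = j}, f ω ∂μ := by
    intro f hf
    have := aux_partition μ Y hY f hf
    rw [this]
    refine Finset.sum_congr rfl fun j _ => ?_
    congr 1
  -- inverse identity: ∑ i, P i j * φ i x a = U j x a
  have hinv : ∀ (j : Fin K) (x : 𝒳) (a : Fin d),
      ∑ i : Fin K, P i j * φ i x a = U j x a := by
    intro j x a
    simp_rw [hφcoord, Finset.mul_sum]
    rw [Finset.sum_comm]
    have h5 : ∀ k : Fin K, ∑ i : Fin K, P i j * (P⁻¹ k i * U k x a)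
        = ((P⁻¹ * P) k j) * U k x a := by
      intro k
      rw [Matrix.mul_apply, Finset.sum_mul]
      refine Finset.sum_congr rfl fun i _ => by ring
    simp_rw [h5, Matrix.nonsing_inv_mul P hP]
    simp [Matrix.one_apply, ite_mul]
  -- the cross moment identity
  have cross : ∀ a b : Fin d,
      ∫ ω, φ (Ystar ω) (X ω) a * U (Y ω) (X ω) b ∂μ
        = ∫ ω, U (Y ω) (X ω) a * U (Y ω) (X ω) b ∂μ := by
    intro a b
    rw [decompS _ (hIntΦV a b)]
    have step1 : ∀ i j : Fin K,
        ∫ ω in {ω | Ystar ω = i ∧ Y ω = j}, φ (Ystar ω) (X ω) a * U (Y ω) (X ω) b ∂μ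
          = P i j * ∫ ω in {ω | Y ω = j}, φ i (X ω) a * U j (X ω) b ∂μ := by
      intro i j
      rw [setIntegral_congr_fun (hSmeas i j)
        (g := fun ω => φ i (X ω) a * U j (X ω) b)
        (fun ω hω => by rcases hω with ⟨h1, h2⟩; simp only [h1, h2])]
      exact key i j (fun x => φ i x a * U j x b) ((hφm i a).mul (hUm j b))
    simp_rw [step1]
    rw [Finset.sum_comm]
    have step2 : ∀ j : Fin K,
        ∑ i : Fin K, P i j * ∫ ω in {ω | Y ω = j}, φ i (X ω) a * U j (X ω) b ∂μ
          = ∫ ω in {ω | Y ω = j}, U (Y ω) (X ω) a * U (Y ω) (X ω) b ∂μ := by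
      intro j
      have hint : ∀ i : Fin K,
          Integrable (fun ω => φ i (X ω) a * U j (X ω) b) (μ.restrict {ω | Y ω = j}) :=
        fun i => (aux_l2_mul_integrable (hφsq i a) (hUsq j b)).restrict
      calc ∑ i : Fin K, P i j * ∫ ω in {ω | Y ω = j}, φ i (X ω) a * U j (X ω) b ∂μ
          = ∑ i : Fin K, ∫ ω in {ω | Y ω = j}, P i j * (φ i (X ω) a * U j (X ω) b) ∂μ := by
            refine Finset.sum_congr rfl fun i _ => ?_
            rw [integral_const_mul]
        _ = ∫ ω in {ω | Y ω = j},
              ∑ i : Fin K, P i j * (φ i (X ω) a * U j (X ω) b) ∂μ := by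
            rw [← integral_finset_sum _ (fun i _ => (hint i).const_mul _)]
        _ = ∫ ω in {ω | Y ω = j}, U j (X ω) a * U j (X ω) b ∂μ := by
            refine integral_congr_ae (Filter.Eventually.of_forall fun ω => ?_)
            dsimp only
            have h6 : ∑ i : Fin K, P i j * (φ i (X ω) a * U j (X ω) b)
                = (∑ i : Fin K, P i j * φ i (X ω) a) * U j (X ω) b := by
              rw [Finset.sum_mul]; exact Finset.sum_congr rfl fun i _ => by ring
            rw [h6, hinv]
        _ = ∫ ω in {ω | Y ω = j}, U (Y ω) (X ω) a * U (Y ω) (X ω) b ∂μ := by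
            refine setIntegral_congr_fun (hTmeas j) fun ω hω => ?_
            have hYω : Y ω = j := hω
            simp only [hYω]
    simp_rw [step2]
    exact (decompT _ (hIntVV a b)).symm
  -- conclude
  intro a b
  have cross2 : ∫ ω, U (Y ω) (X ω) a * φ (Ystar ω) (X ω) b ∂μ
      = ∫ ω, U (Y ω) (X ω) a * U (Y ω) (X ω) b ∂μ := by
    have h7 := cross b a
    calc ∫ ω, U (Y ω) (X ω) a * φ (Ystar ω) (X ω) b ∂μ
        = ∫ ω, φ (Ystar ω) (X ω) b * U (Y ω) (X ω) a ∂μ := by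
          refine integral_congr_ae (Filter.Eventually.of_forall fun ω => ?_); ring
      _ = ∫ ω, U (Y ω) (X ω) b * U (Y ω) (X ω) a ∂μ := h7
      _ = ∫ ω, U (Y ω) (X ω) a * U (Y ω) (X ω) b ∂μ := by
          refine integral_congr_ae (Filter.Eventually.of_forall fun ω => ?_); ring
  have expand : ∫ ω, (φ (Ystar ω) (X ω) a - U (Y ω) (X ω) a)
      * (φ (Ystar ω) (X ω) b - U (Y ω) (X ω) b) ∂μ
    = ∫ ω, φ (Ystar ω) (X ω) a * φ (Ystar ω) (X ω) b ∂μ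
      - ∫ ω, φ (Ystar ω) (X ω) a * U (Y ω) (X ω) b ∂μ
      - ∫ ω, U (Y ω) (X ω) a * φ (Ystar ω) (X ω) b ∂μ
      + ∫ ω, U (Y ω) (X ω) a * U (Y ω) (X ω) b ∂μ := by
    have h1 : (fun ω => (φ (Ystar ω) (X ω) a - U (Y ω) (X ω) a)
        * (φ (Ystar ω) (X ω) b - U (Y ω) (X ω) b))
      = fun ω => φ (Ystar ω) (X ω) a * φ (Ystar ω) (X ω) b
          - φ (Ystar ω) (X ω) a * U (Y ω) (X ω) b
          - U (Y ω) (X ω) a * φ (Ystar ω) (X ω) b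
          + U (Y ω) (X ω) a * U (Y ω) (X ω) b := by
      funext ω; ring
    have i1 : Integrable (fun ω => φ (Ystar ω) (X ω) a * φ (Ystar ω) (X ω) b
        - φ (Ystar ω) (X ω) a * U (Y ω) (X ω) b) μ := (hIntΦΦ a b).sub (hIntΦV a b)
    have i2 : Integrable (fun ω => φ (Ystar ω) (X ω) a * φ (Ystar ω) (X ω) b
        - φ (Ystar ω) (X ω) a * U (Y ω) (X ω) b
        - U (Y ω) (X ω) a * φ (Ystar ω) (X ω) b) μ := i1.sub (hIntVΦ a b)
    have e3 : ∫ ω, (φ (Ystar ω) (X ω) a * φ (Ystar ω) (X ω) b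
          - φ (Ystar ω) (X ω) a * U (Y ω) (X ω) b
          - U (Y ω) (X ω) a * φ (Ystar ω) (X ω) b)
          + U (Y ω) (X ω) a * U (Y ω) (X ω) b ∂μ
        = ∫ ω, (φ (Ystar ω) (X ω) a * φ (Ystar ω) (X ω) b
            - φ (Ystar ω) (X ω) a * U (Y ω) (X ω) b
            - U (Y ω) (X ω) a * φ (Ystar ω) (X ω) b) ∂μ
          + ∫ ω, U (Y ω) (X ω) a * U (Y ω) (X ω) b ∂μ :=
      integral_add i2 (hIntVV a b)
    have e2 : ∫ ω, (φ (Ystar ω) (X ω) a * φ (Ystar ω) (X ω) b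
          - φ (Ystar ω) (X ω) a * U (Y ω) (X ω) b
          - U (Y ω) (X ω) a * φ (Ystar ω) (X ω) b) ∂μ
        = ∫ ω, (φ (Ystar ω) (X ω) a * φ (Ystar ω) (X ω) b
            - φ (Ystar ω) (X ω) a * U (Y ω) (X ω) b) ∂μ
          - ∫ ω, U (Y ω) (X ω) a * φ (Ystar ω) (X ω) b ∂μ :=
      integral_sub i1 (hIntVΦ a b)
    have e1 : ∫ ω, (φ (Ystar ω) (X ω) a * φ (Ystar ω) (X ω) b
          - φ (Ystar ω) (X ω) a * U (Y ω) (X ω) b) ∂μ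
        = ∫ ω, φ (Ystar ω) (X ω) a * φ (Ystar ω) (X ω) b ∂μ
          - ∫ ω, φ (Ystar ω) (X ω) a * U (Y ω) (X ω) b ∂μ :=
      integral_sub (hIntΦΦ a b) (hIntΦV a b)
    rw [h1, e3, e2, e1]
  rw [expand, cross a b, cross2]
  ring
end

section
/- Strong-law consistency of the proposed estimating equation at the true parameter: let (Xᵢ, Yᵢ*) for i ∈ ℕ be an i.i.d. sequence with the same joint distribution as (X, Y*), suppose every function ω ↦ U k (X ω) (k ∈ Fin K) is integrable, and suppose 𝔼[U(Y, X)] = 0. Then the sample average (1/n) Σ_{i=1}^{n} φ(Yᵢ*, Xᵢ) converges to 0 ∈ ℝ^d almost surely as n → ∞, where φ i x = Σ_k (P⁻¹) k i • U k x. -/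
/-!
Since `Y*` is drawn from column `Y` of `P` independently of `X`, every `f` satisfies
`𝔼[f(Y*, X)] = 𝔼[∑ i, P i Y • f i X]`. For `f = φ` the inner sum collapses through `P⁻¹ P = 1`
to `U(Y, X)`, so `𝔼[φ(Y*, X)] = 𝔼[U(Y, X)] = 0`, and the strong law of large numbers for the
i.i.d. sequence `φ(Yᵢ*, Xᵢ)` gives the claim.
-/

open MeasureTheory ProbabilityTheory Finset Filter

lemma sum_indicator_fiber_apply {Ω ι M : Type*} [Fintype ι] [AddCommMonoid M] (Z : Ω → ι)
    (g : ι → Ω → M) (ω : Ω) : ∑ i, {ω | Z ω = i}.indicator (g i) ω = g (Z ω) ω := by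
  classical
  simp [Set.indicator_apply]

section Fibers

variable {Ω ι E : Type*} [MeasurableSpace Ω] [MeasurableSpace ι] [MeasurableSingletonClass ι]
  [Fintype ι] [NormedAddCommGroup E] {μ : Measure Ω} {Z : Ω → ι} {g : ι → Ω → E}

lemma integrable_comp_fiber (hZ : Measurable Z) (hg : ∀ i, Integrable (g i) μ) :
    Integrable (fun ω => g (Z ω) ω) μ := by
  simp_rw [← sum_indicator_fiber_apply Z g]
  exact integrable_finsetSum _ fun i _ => (hg i).indicator (hZ (measurableSet_singleton i))

lemma integral_comp_fiber [NormedSpace ℝ E] (hZ : Measurable Z) (hg : ∀ i, Integrable (g i) μ) :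
    ∫ ω, g (Z ω) ω ∂μ = ∑ i, ∫ ω in {ω | Z ω = i}, g i ω ∂μ := by
  simp_rw [← sum_indicator_fiber_apply Z g]
  rw [integral_finsetSum]
  · exact Finset.sum_congr rfl fun i _ => integral_indicator (hZ (measurableSet_singleton i))
  · exact fun i _ => (hg i).indicator (hZ (measurableSet_singleton i))

end Fibers

lemma integral_eq_smul_of_measureReal_eq {α E : Type*} [MeasurableSpace α]
    [NormedAddCommGroup E] [NormedSpace ℝ E] {ν ρ : Measure α} [IsFiniteMeasure ν]
    [IsFiniteMeasure ρ] {c : ℝ} (h : ∀ A, MeasurableSet A → ν.real A = c * ρ.real A)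
    (f : α → E) : ∫ x, f x ∂ν = c • ∫ x, f x ∂ρ := by
  rcases eq_zero_or_neZero ρ with rfl | hρ
  · have hν : ν = 0 := by
      ext A hA
      simpa [measureReal_eq_zero_iff] using h A hA
    simp [hν]
  · have hc : 0 ≤ c := by
      have h_univ := h Set.univ MeasurableSet.univ
      nlinarith [measureReal_nonneg (μ := ν) (s := Set.univ), measureReal_univ_pos (μ := ρ)]
    have hνρ : ν = ENNReal.ofReal c • ρ := by
      ext A hA
      rw [Measure.smul_apply, smul_eq_mul, ← ofReal_measureReal, h A hA,
        ENNReal.ofReal_mul hc, ofReal_measureReal]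
    rw [hνρ, integral_smul_measure, ENNReal.toReal_ofReal hc]

/-- `P i j` is the probability of releasing category `i` when the true category is `j`,
whatever the value of `X`. -/
def IsPRAM {Ω ι 𝒳 : Type*} [MeasurableSpace Ω] [MeasurableSpace 𝒳] (μ : Measure Ω)
    (Y Ystar : Ω → ι) (X : Ω → 𝒳) (P : Matrix ι ι ℝ) : Prop :=
  ∀ i j (A : Set 𝒳), MeasurableSet A →
    μ.real {ω | Ystar ω = i ∧ Y ω = j ∧ X ω ∈ A} = P i j * μ.real {ω | Y ω = j ∧ X ω ∈ A}

namespace IsPRAM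

variable {Ω ι 𝒳 E : Type*} [MeasurableSpace Ω] [MeasurableSpace 𝒳] [NormedAddCommGroup E]
  [NormedSpace ℝ E] {μ : Measure Ω} [IsFiniteMeasure μ] {Y Ystar : Ω → ι} {X : Ω → 𝒳}
  {P : Matrix ι ι ℝ}

lemma setIntegral_comp (h : IsPRAM μ Y Ystar X P) (hX : Measurable X) {f : 𝒳 → E}
    (hf : StronglyMeasurable f) (i j : ι) :
    ∫ ω in {ω | Ystar ω = i ∧ Y ω = j}, f (X ω) ∂μ
      = P i j • ∫ ω in {ω | Y ω = j}, f (X ω) ∂μ := by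
  rw [← integral_map hX.aemeasurable hf.aestronglyMeasurable,
    ← integral_map hX.aemeasurable hf.aestronglyMeasurable]
  refine integral_eq_smul_of_measureReal_eq (fun A hA => ?_) f
  rw [map_measureReal_apply hX hA, map_measureReal_apply hX hA,
    measureReal_restrict_apply (hX hA), measureReal_restrict_apply (hX hA)]
  convert h i j A hA using 3 <;> ext ω <;>
    simp only [Set.mem_inter_iff, Set.mem_preimage, Set.mem_ofPred_eq] <;> tauto

lemma integral_comp [Fintype ι] [MeasurableSpace ι] [MeasurableSingletonClass ι]
    (h : IsPRAM μ Y Ystar X P) (hY : Measurable Y) (hYstar : Measurable Ystar)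
    (hX : Measurable X) {f : ι → 𝒳 → E}
    (hf : ∀ i, StronglyMeasurable (f i)) (hfX : ∀ i, Integrable (fun ω => f i (X ω)) μ) :
    ∫ ω, f (Ystar ω) (X ω) ∂μ = ∫ ω, ∑ i, P i (Y ω) • f i (X ω) ∂μ := by
  have hPfX : ∀ i j, Integrable (fun ω => P i j • f i (X ω)) μ := fun i j => (hfX i).smul (P i j)
  calc ∫ ω, f (Ystar ω) (X ω) ∂μ
      = ∑ p : ι × ι, ∫ ω in {ω | (Ystar ω, Y ω) = p}, f p.1 (X ω) ∂μ :=
        integral_comp_fiber (g := fun p ω => f p.1 (X ω)) (hYstar.prodMk hY) fun p => hfX p.1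
    _ = ∑ i, ∑ j, P i j • ∫ ω in {ω | Y ω = j}, f i (X ω) ∂μ := by
        simp only [Fintype.sum_prod_type, Prod.mk.injEq, h.setIntegral_comp hX (hf _)]
    _ = ∑ j, ∫ ω in {ω | Y ω = j}, ∑ i, P i j • f i (X ω) ∂μ := by
        rw [Finset.sum_comm]
        refine Finset.sum_congr rfl fun j _ => ?_
        rw [integral_finsetSum _ fun i _ => (hPfX i j).restrict]
        simp only [integral_smul]
    _ = ∫ ω, ∑ i, P i (Y ω) • f i (X ω) ∂μ :=
        (integral_comp_fiber (g := fun j ω => ∑ i, P i j • f i (X ω)) hY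
          fun j => integrable_finsetSum _ fun i _ => hPfX i j).symm

end IsPRAM

lemma Matrix.sum_smul_sum_inv_smul {ι R M : Type*} [Fintype ι] [DecidableEq ι] [CommRing R]
    [AddCommGroup M] [Module R M] {P : Matrix ι ι R} (hP : IsUnit P.det) (u : ι → M) (j : ι) :
    ∑ i, P i j • ∑ k, P⁻¹ k i • u k = u j := by
  calc ∑ i, P i j • ∑ k, P⁻¹ k i • u k = ∑ k, (P⁻¹ * P) k j • u k := by
        simp only [Finset.smul_sum, smul_smul, Matrix.mul_apply, Finset.sum_smul]
        rw [Finset.sum_comm]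
        simp only [mul_comm]
    _ = u j := by simp [Matrix.nonsing_inv_mul P hP, Matrix.one_apply]

lemma strong_law_ae_comp {Ω β E : Type*} [MeasurableSpace Ω] [MeasurableSpace β]
    [NormedAddCommGroup E] [NormedSpace ℝ E] [CompleteSpace E] [MeasurableSpace E] [BorelSpace E]
    {μ : Measure Ω} {W : ℕ → Ω → β} {W₀ : Ω → β} (hindep : iIndepFun W μ)
    (hident : ∀ n, IdentDistrib (W n) W₀ μ μ) {g : β → E} (hg : Measurable g)
    (hint : Integrable (fun ω => g (W₀ ω)) μ) :
    ∀ᵐ ω ∂μ, Tendsto (fun n : ℕ => (n : ℝ)⁻¹ • ∑ i ∈ range n, g (W i ω)) atTop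
      (nhds (∫ ω, g (W₀ ω) ∂μ)) := by
  have hident₀ : IdentDistrib (fun ω => g (W 0 ω)) (fun ω => g (W₀ ω)) μ μ := (hident 0).comp hg
  rw [← hident₀.integral_eq]
  exact strong_law_ae (fun n ω => g (W n ω)) (hident₀.integrable_iff.mpr hint)
    (fun i j hij => (hindep.indepFun hij).comp hg hg)
    fun n => ((hident n).trans (hident 0).symm).comp hg

theorem pram_strong_law_consistency_general {Ω 𝒳 : Type*} [MeasurableSpace Ω] [MeasurableSpace 𝒳]
    (μ : Measure Ω) [IsProbabilityMeasure μ] {K d : ℕ}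
    (Y Ystar : Ω → Fin K) (X : Ω → 𝒳)
    (hY : Measurable Y) (hYstar : Measurable Ystar) (hX : Measurable X)
    (P : Matrix (Fin K) (Fin K) ℝ) (hP : IsUnit P.det)
    (hpram : ∀ (i j : Fin K) (A : Set 𝒳), MeasurableSet A →
      (μ {ω | Ystar ω = i ∧ Y ω = j ∧ X ω ∈ A}).toReal
        = P i j * (μ {ω | Y ω = j ∧ X ω ∈ A}).toReal)
    (U : Fin K → 𝒳 → (Fin d → ℝ)) (hU : ∀ k, Measurable (U k))
    (hUint : ∀ k : Fin K, Integrable (fun ω => U k (X ω)) μ)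
    (hmean : ∫ ω, U (Y ω) (X ω) ∂μ = 0)
    (φ : Fin K → 𝒳 → (Fin d → ℝ))
    (hφ : ∀ i x, φ i x = ∑ k : Fin K, P⁻¹ k i • U k x)
    (Xs : ℕ → Ω → 𝒳) (Ys : ℕ → Ω → Fin K)
    (hindep : iIndepFun
      (fun n ω => (Xs n ω, Ys n ω)) μ)
    (hident : ∀ n : ℕ,
      IdentDistrib (fun ω => (Xs n ω, Ys n ω)) (fun ω => (X ω, Ystar ω)) μ μ) :
    ∀ᵐ ω ∂μ, Tendsto
      (fun n : ℕ => (n : ℝ)⁻¹ • ∑ i ∈ Finset.range n, φ (Ys i ω) (Xs i ω))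
      atTop (nhds (0 : Fin d → ℝ)) := by
  have hφ_eq : ∀ i, φ i = fun x => ∑ k, P⁻¹ k i • U k x := fun i => funext (hφ i)
  have hφ_meas : ∀ i, Measurable (φ i) := fun i => by rw [hφ_eq]; fun_prop
  have hφX_int : ∀ i, Integrable (fun ω => φ i (X ω)) μ := fun i => by
    simp only [hφ_eq]
    exact integrable_finsetSum _ fun k _ => (hUint k).smul (P⁻¹ k i)
  have hφ_mean : ∫ ω, φ (Ystar ω) (X ω) ∂μ = 0 := by
    rw [IsPRAM.integral_comp hpram hY hYstar hX (fun i => (hφ_meas i).stronglyMeasurable) hφX_int]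
    simpa only [hφ_eq, Matrix.sum_smul_sum_inv_smul hP] using hmean
  simpa only [hφ_mean] using strong_law_ae_comp hindep hident
    (g := fun p : 𝒳 × Fin K => φ p.2 p.1) (measurable_from_prod_countable_left hφ_meas)
    (integrable_comp_fiber hYstar hφX_int)

/-- Strong-law consistency of the proposed estimating equation at the true parameter:
for an i.i.d. sequence `(Xᵢ, Yᵢ*)` distributed as `(X, Y*)`, if `𝔼[U(Y, X)] = 0`, then
`(1/n) ∑_{i<n} φ(Yᵢ*, Xᵢ) → 0` almost surely, where `φ i x = ∑ k, (P⁻¹) k i • U k x`. -/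
theorem pram_strong_law_consistency {Ω 𝒳 : Type*} [MeasurableSpace Ω] [MeasurableSpace 𝒳]
    (μ : Measure Ω) [IsProbabilityMeasure μ] {K d : ℕ}
    (Y Ystar : Ω → Fin K) (X : Ω → 𝒳)
    (hY : Measurable Y) (hYstar : Measurable Ystar) (hX : Measurable X)
    (P : Matrix (Fin K) (Fin K) ℝ) (hP : IsUnit P.det)
    (hpram : ∀ (i j : Fin K) (A : Set 𝒳), MeasurableSet A →
      (μ {ω | Ystar ω = i ∧ Y ω = j ∧ X ω ∈ A}).toReal
        = P i j * (μ {ω | Y ω = j ∧ X ω ∈ A}).toReal)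
    (U : Fin K → 𝒳 → (Fin d → ℝ)) (hU : ∀ k, Measurable (U k))
    (hUint : ∀ k : Fin K, Integrable (fun ω => U k (X ω)) μ)
    (hmean : ∫ ω, U (Y ω) (X ω) ∂μ = 0)
    (φ : Fin K → 𝒳 → (Fin d → ℝ))
    (hφ : ∀ i x, φ i x = ∑ k : Fin K, P⁻¹ k i • U k x)
    (Xs : ℕ → Ω → 𝒳) (Ys : ℕ → Ω → Fin K)
    (hXs : ∀ n, Measurable (Xs n)) (hYs : ∀ n, Measurable (Ys n))
    (hindep : iIndepFun
      (fun n ω => (Xs n ω, Ys n ω)) μ)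
    (hident : ∀ n : ℕ,
      IdentDistrib (fun ω => (Xs n ω, Ys n ω)) (fun ω => (X ω, Ystar ω)) μ μ) :
    ∀ᵐ ω ∂μ, Tendsto
      (fun n : ℕ => (n : ℝ)⁻¹ • ∑ i ∈ Finset.range n, φ (Ys i ω) (Xs i ω))
      atTop (nhds (0 : Fin d → ℝ)) :=
  pram_strong_law_consistency_general μ Y Ystar X hY hYstar hX P hP hpram U hU hUint hmean φ hφ Xs
    Ys hindep hident
end
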